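/- Let $J$ be a finite set, $m_j \in \mathbb{R}$, $l_j > 0$, $V > 0$, $p_{\max} > 0$, and suppose $\tilde p_j = [m_j/V - 1/l_j]^+$ satisfies $\sum_{j \in J} \tilde p_j > p_{\max}$. Then any minimizer $p^*$ of $\sum_j (V p_j - m_j \log_2(1 + l_j p_j))$ over the set $\{p : p_j \geq 0, \sum_j p_j \leq p_{\max}\}$ satisfies $\sum_j p^*_j = p_{\max}$. -/

import Mathlib

private lemma key_decrease (m l V p q : ℝ) (hl : 0 < l) (hV : 0 < V)
    (hp : 0 ≤ p) (hpq : p < q) (hq : q ≤ m / V - 1 / l) :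
    V * q - m * Real.logb 2 (1 + l * q) < V * p - m * Real.logb 2 (1 + l * p) := by
  have hm : 0 < m := by
    have h1 : (0:ℝ) < 1 / l := by positivity
    have h2 : 0 < m / V := by nlinarith
    rcases div_pos_iff.mp h2 with ⟨h3, _⟩ | ⟨_, h4⟩
    · exact h3
    · linarith
  have h1p : (0:ℝ) < 1 + l * p := by nlinarith
  have h1q : (0:ℝ) < 1 + l * q := by nlinarith
  have hlt : 1 + l * p < 1 + l * q := by nlinarith
  have hlq_le : 1 + l * q ≤ l * m / V := by
    have : l * q ≤ l * (m / V - 1 / l) := by nlinarith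
    have heq : l * (m / V - 1 / l) = l * m / V - 1 := by field_simp
    linarith
  have hratio : (1 + l * p) / (1 + l * q) < 1 := (div_lt_one h1q).mpr hlt
  have hlog := Real.log_lt_sub_one_of_pos (x := (1 + l * p) / (1 + l * q))
    (by positivity) (ne_of_lt hratio)
  rw [Real.log_div (by positivity) (by positivity)] at hlog
  set D := Real.log (1 + l * q) - Real.log (1 + l * p) with hD
  have hDgt : D * (1 + l * q) > l * (q - p) := by
    have h2 : (1 + l * p) / (1 + l * q) - 1 = -(l * (q - p)) / (1 + l * q) := by
      field_simp; ring
    rw [h2] at hlog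
    have h3 := (lt_div_iff₀ h1q).mp hlog
    nlinarith [h3]
  have hVq : V * (1 + l * q) ≤ l * m := by
    have := (div_le_div_iff_of_pos_right hV).mpr hlq_le
    nlinarith [(le_div_iff₀ hV).mp hlq_le]
  have hmD : m * D > V * (q - p) := by nlinarith [hDgt, hVq, hm, h1q]
  have hlog2pos : (0:ℝ) < Real.log 2 := Real.log_pos (by norm_num)
  have hlog2lt : Real.log 2 < 1 := by
    have := Real.log_two_lt_d9; linarith
  have hDpos : 0 < D := by nlinarith
  have hfinal : m * Real.logb 2 (1 + l * q) - m * Real.logb 2 (1 + l * p) > V * (q - p) := by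
    have : m * Real.logb 2 (1 + l * q) - m * Real.logb 2 (1 + l * p) = m * D / Real.log 2 := by
      simp only [Real.logb, hD]; field_simp
    rw [this]
    have h1 : m * D ≤ m * D / Real.log 2 := by
      rw [le_div_iff₀ hlog2pos]
      nlinarith [mul_pos hm hDpos, hlog2lt]
    exact lt_of_lt_of_le hmD h1
  linarith

/-- Lemma 1: if the unconstrained water-filling solution exceeds the power budget, the
sum-power constraint is active at any optimum. -/
theorem sum_power_constraint_active {ι : Type*} (J : Finset ι)
    (m l : ι → ℝ) (hl : ∀ j ∈ J, 0 < l j) (V pmax : ℝ) (hV : 0 < V) (hp : 0 < pmax)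
    (hexceed : (∑ j ∈ J, max (m j / V - 1 / l j) 0) > pmax)
    (pstar : ι → ℝ)
    (hfeas : (∀ j ∈ J, 0 ≤ pstar j) ∧ (∑ j ∈ J, pstar j) ≤ pmax)
    (hopt : ∀ q : ι → ℝ, (∀ j ∈ J, 0 ≤ q j) → (∑ j ∈ J, q j) ≤ pmax →
      (∑ j ∈ J, (V * pstar j - m j * Real.logb 2 (1 + l j * pstar j)))
        ≤ (∑ j ∈ J, (V * q j - m j * Real.logb 2 (1 + l j * q j)))) :
    (∑ j ∈ J, pstar j) = pmax := by
  classical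
  by_contra hne
  have hS : (∑ j ∈ J, pstar j) < pmax := lt_of_le_of_ne hfeas.2 hne
  -- find j with tilde p j > pstar j
  have hsum : (∑ j ∈ J, pstar j) < ∑ j ∈ J, max (m j / V - 1 / l j) 0 := lt_trans hS hexceed
  obtain ⟨j, hjJ, hj⟩ := Finset.exists_lt_of_sum_lt hsum
  have hpj : 0 ≤ pstar j := hfeas.1 j hjJ
  have htilde : pstar j < m j / V - 1 / l j := by
    rcases le_or_gt (m j / V - 1 / l j) 0 with h | h
    · rw [max_eq_right h] at hj; linarith
    · rwa [max_eq_left h.le] at hj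
  set ε := min (pmax - ∑ i ∈ J, pstar i) (m j / V - 1 / l j - pstar j) with hε
  have hεpos : 0 < ε := lt_min (by linarith) (by linarith)
  set q : ι → ℝ := Function.update pstar j (pstar j + ε) with hq
  have hqj : q j = pstar j + ε := Function.update_self _ _ _
  have hqne : ∀ i, i ≠ j → q i = pstar i := fun i hi => Function.update_of_ne hi _ _
  have hsumq : (∑ i ∈ J, q i) = (∑ i ∈ J, pstar i) + ε := by
    rw [hq, Finset.sum_update_of_mem hjJ, ← Finset.erase_eq,
        ← Finset.sum_erase_add J pstar hjJ]
    ring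
  have hqnn : ∀ i ∈ J, 0 ≤ q i := by
    intro i hi
    by_cases h : i = j
    · subst h; rw [hqj]; linarith
    · rw [hqne i h]; exact hfeas.1 i hi
  have hqle : (∑ i ∈ J, q i) ≤ pmax := by
    rw [hsumq]
    have := min_le_left (pmax - ∑ i ∈ J, pstar i) (m j / V - 1 / l j - pstar j)
    linarith [this]
  have hle := hopt q hqnn hqle
  -- strict decrease at j
  have hkey : V * q j - m j * Real.logb 2 (1 + l j * q j)
      < V * pstar j - m j * Real.logb 2 (1 + l j * pstar j) := by
    rw [hqj]
    apply key_decrease _ _ _ _ _ (hl j hjJ) hV hpj (by linarith)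
    have := min_le_right (pmax - ∑ i ∈ J, pstar i) (m j / V - 1 / l j - pstar j)
    linarith [this]
  have hsums : (∑ i ∈ J, (V * q i - m i * Real.logb 2 (1 + l i * q i)))
      < ∑ i ∈ J, (V * pstar i - m i * Real.logb 2 (1 + l i * pstar i)) := by
    rw [← Finset.sum_erase_add J _ hjJ,
        ← Finset.sum_erase_add J (fun i => V * pstar i - m i * Real.logb 2 (1 + l i * pstar i)) hjJ]
    have hcongr : (∑ i ∈ J.erase j, (V * q i - m i * Real.logb 2 (1 + l i * q i)))
        = ∑ i ∈ J.erase j, (V * pstar i - m i * Real.logb 2 (1 + l i * pstar i)) := by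
      apply Finset.sum_congr rfl
      intro i hi
      rw [hqne i (Finset.ne_of_mem_erase hi)]
    rw [hcongr]
    linarith
  linarith
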